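/- arXiv:2507.01709 — 2 statements merged into one kernel-verified Lean document; each statement's English description precedes it below -/
import Mathlib

section
/- For positive definite d×d matrices A and B, the d×d matrix C = A^{1/2}(A^{1/2} B A^{1/2})^{1/2} A^{-1/2} satisfies: the block matrix [[A, C],[Cᵀ, B]] is positive semidefinite, and tr(C) = tr((A^{1/2} B A^{1/2})^{1/2}). -/
/-!
With `S = A^{1/2}` and `M = (S B S)^{1/2}`, both symmetric, the block matrix is
the Gram matrix `X Xᵀ` of the stacked matrix `X = [S; S⁻¹ M]`: indeed `S Sᵀ = A`,
`S (S⁻¹ M)ᵀ = S M S⁻¹ = C` and `(S⁻¹ M)(S⁻¹ M)ᵀ = S⁻¹ (S B S) S⁻¹ = B`.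
The trace identity is invariance of the trace under conjugation by `S`.
-/

open Matrix

open Classical in
/-- The positive semidefinite square root (zero if not positive semidefinite). -/
noncomputable def psqrt {d : ℕ} (X : Matrix (Fin d) (Fin d) ℝ) : Matrix (Fin d) (Fin d) ℝ :=
  if h : X.PosSemidef then (h.1.eigenvectorUnitary.1 * diagonal ((↑) ∘ (Real.sqrt ∘ h.1.eigenvalues)) *
    (star h.1.eigenvectorUnitary : Matrix (Fin d) (Fin d) ℝ)) else 0

open scoped MatrixOrder ComplexOrder

theorem psqrt_eq_cfcSqrt {d : ℕ} {X : Matrix (Fin d) (Fin d) ℝ} (hX : X.PosSemidef) :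
    psqrt X = CFC.sqrt X := by
  rw [CFC.sqrt_eq_cfc, cfc_nnreal_eq_real _ X, hX.1.cfc_eq, psqrt, dif_pos hX,
    IsHermitian.cfc, Unitary.conjStarAlgAut_apply]
  congr! 3
  funext i
  simp [hX.eigenvalues_nonneg i]

theorem posSemidef_psqrt {d : ℕ} {X : Matrix (Fin d) (Fin d) ℝ} (hX : X.PosSemidef) :
    (psqrt X).PosSemidef :=
  psqrt_eq_cfcSqrt hX ▸ (CFC.sqrt_nonneg X).posSemidef

theorem psqrt_mul_psqrt {d : ℕ} {X : Matrix (Fin d) (Fin d) ℝ} (hX : X.PosSemidef) :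
    psqrt X * psqrt X = X :=
  psqrt_eq_cfcSqrt hX ▸ CFC.sqrt_mul_sqrt_self X hX.nonneg

theorem isUnit_psqrt {d : ℕ} {X : Matrix (Fin d) (Fin d) ℝ} (hX : X.PosDef) :
    IsUnit (psqrt X) := by
  rw [psqrt_eq_cfcSqrt hX.posSemidef, CFC.isUnit_sqrt_iff X hX.posSemidef.nonneg]
  exact hX.isUnit

theorem Matrix.posSemidef_fromBlocks_mul_conjTranspose {m n k 𝕜 : Type*} [Finite m] [Finite n]
    [Fintype k] [RCLike 𝕜] (S : Matrix m k 𝕜) (N : Matrix n k 𝕜) :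
    (fromBlocks (S * Sᴴ) (S * Nᴴ) (N * Sᴴ) (N * Nᴴ)).PosSemidef := by
  rw [← fromRows_mul_fromCols, ← conjTranspose_fromRows_eq_fromCols_conjTranspose]
  exact posSemidef_self_mul_conjTranspose _

theorem Matrix.IsHermitian.posSemidef_fromBlocks_conj {n 𝕜 : Type*} [Fintype n] [DecidableEq n]
    [RCLike 𝕜] {S M : Matrix n n 𝕜} (hS : S.IsHermitian) (hM : M.IsHermitian) :
    (Matrix.fromBlocks (S * S) (S * M * S⁻¹) (S⁻¹ * M * S)
      (S⁻¹ * (M * M) * S⁻¹)).PosSemidef := by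
  have hS' : S⁻¹ᴴ = S⁻¹ := by rw [conjTranspose_nonsing_inv, hS.eq]
  simpa [hS.eq, hM.eq, hS', Matrix.mul_assoc] using
    posSemidef_fromBlocks_mul_conjTranspose S (S⁻¹ * M)

theorem stmt0 {d : ℕ} (A B : Matrix (Fin d) (Fin d) ℝ) (hA : A.PosDef) (hB : B.PosDef)
    (C : Matrix (Fin d) (Fin d) ℝ)
    (hC : C = psqrt A * psqrt (psqrt A * B * psqrt A) * (psqrt A)⁻¹) :
    (Matrix.fromBlocks A C Cᵀ B).PosSemidef ∧
      C.trace = (psqrt (psqrt A * B * psqrt A)).trace := by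
  set S := psqrt A
  have hS : S.IsHermitian := (posSemidef_psqrt hA.posSemidef).isHermitian
  have hS_det : IsUnit S.det := (isUnit_iff_isUnit_det S).mp (isUnit_psqrt hA)
  have hSBS : (S * B * S).PosSemidef := by
    simpa only [hS.eq] using hB.posSemidef.mul_mul_conjTranspose_same S
  set M := psqrt (S * B * S)
  have hM : M.IsHermitian := (posSemidef_psqrt hSBS).isHermitian
  have hA' : S * S = A := psqrt_mul_psqrt hA.posSemidef
  have hB' : S⁻¹ * (M * M) * S⁻¹ = B := by
    rw [psqrt_mul_psqrt hSBS, Matrix.mul_assoc, Matrix.mul_assoc, mul_nonsing_inv _ hS_det,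
      Matrix.mul_one, ← Matrix.mul_assoc, nonsing_inv_mul _ hS_det, Matrix.one_mul]
  have hCt : Cᵀ = S⁻¹ * M * S := by
    rw [← conjTranspose_eq_transpose_of_trivial, hC, conjTranspose_mul, conjTranspose_mul,
      conjTranspose_nonsing_inv, hS.eq, hM.eq, Matrix.mul_assoc]
  subst hC
  refine ⟨?_, ?_⟩
  · have := hS.posSemidef_fromBlocks_conj hM
    rwa [hA', hB', ← hCt] at this
  · rw [trace_mul_cycle, nonsing_inv_mul _ hS_det, Matrix.one_mul]
end

section
/- Let a, b > 0, ε > 0, and ρ ∈ (−1,1) with ab(1−ρ²) + ερ > 0. Define c_ε = (√((ab + ερ/(1−ρ²))² + ε²/4) − ε/2) · ab(1−ρ²)/(ab(1−ρ²) + ερ). Then |c_ε| < ab and the 2×2 matrix [[a², c_ε],[c_ε, b²]] is positive definite; moreover c_ε satisfies the scalar equation ε c = a² m (b² − c²/a²) where m = 1 + ερ/(ab(1−ρ²)). -/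
/-!
With `k = ab + ερ/(1-ρ²)` and `r = 1/m = ab(1-ρ²)/(ab(1-ρ²)+ερ)` we have `k r = ab` and
`c_ε = x r`, where `x = √(k² + ε²/4) - ε/2` is the positive root of `x² + εx = k²`, so `0 < x < k`.
Hence `0 < c_ε < ab`, which gives positive definiteness, and multiplying the root equation by `r`
gives the scalar equation.
-/
open Matrix

theorem Matrix.posDef_fin_two_of {R : Type*} [Field R] [LinearOrder R] [IsStrictOrderedRing R]
    [StarRing R] [TrivialStar R] {p q c : R} (hp : 0 < p) (hdet : c ^ 2 < p * q) :
    (!![p, c; c, q]).PosDef := by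
  refine PosDef.of_dotProduct_mulVec_pos ?_ fun x hx => ?_
  · ext i j
    fin_cases i <;> fin_cases j <;> simp
  have hform : star x ⬝ᵥ (!![p, c; c, q] *ᵥ x) = p * x 0 ^ 2 + 2 * c * x 0 * x 1 + q * x 1 ^ 2 := by
    simp only [star_trivial, dotProduct, mulVec, Fin.sum_univ_two, of_apply, cons_val',
      cons_val_zero, cons_val_one, cons_val_fin_one]
    ring
  rw [hform]
  -- completing the square: `p · form = (p x₀ + c x₁)² + (pq - c²) x₁²`
  refine pos_of_mul_pos_right (a := p) ?_ hp.le
  rcases eq_or_ne (x 1) 0 with h1 | h1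
  · have h0 : x 0 ≠ 0 := fun h0 => hx (by ext i; fin_cases i <;> assumption)
    rw [h1]
    nlinarith [pow_pos hp 2, pow_two_pos_of_ne_zero h0]
  · nlinarith [sq_nonneg (p * x 0 + c * x 1), mul_pos (sub_pos.2 hdet) (pow_two_pos_of_ne_zero h1)]

theorem sq_add_mul_sqrt_sq_add_sq_div_four_sub_half (k ε : ℝ) :
    (√(k ^ 2 + ε ^ 2 / 4) - ε / 2) ^ 2 + ε * (√(k ^ 2 + ε ^ 2 / 4) - ε / 2) = k ^ 2 := by
  have := Real.sq_sqrt (by positivity : 0 ≤ k ^ 2 + ε ^ 2 / 4)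
  linear_combination this

theorem sqrt_sq_add_sq_div_four_sub_half_mem_Ioo {k ε : ℝ} (hk : 0 < k) (hε : 0 < ε) :
    √(k ^ 2 + ε ^ 2 / 4) - ε / 2 ∈ Set.Ioo 0 k := by
  have hS := Real.sqrt_nonneg (k ^ 2 + ε ^ 2 / 4)
  have hroot := sq_add_mul_sqrt_sq_add_sq_div_four_sub_half k ε
  set x := √(k ^ 2 + ε ^ 2 / 4) - ε / 2 with hx_def
  constructor <;> nlinarith

theorem stmt17 (a b ε ρ : ℝ) (ha : 0 < a) (hb : 0 < b) (hε : 0 < ε)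
    (hρ : ρ ∈ Set.Ioo (-1 : ℝ) 1) (hden : 0 < a * b * (1 - ρ ^ 2) + ε * ρ)
    (m c : ℝ) (hm : m = 1 + ε * ρ / (a * b * (1 - ρ ^ 2)))
    (hc : c = (Real.sqrt ((a * b + ε * ρ / (1 - ρ ^ 2)) ^ 2 + ε ^ 2 / 4) - ε / 2) *
        (a * b * (1 - ρ ^ 2) / (a * b * (1 - ρ ^ 2) + ε * ρ))) :
    |c| < a * b ∧ (!![a ^ 2, c; c, b ^ 2]).PosDef ∧
      ε * c = a ^ 2 * m * (b ^ 2 - c ^ 2 / a ^ 2) := by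
  have hs : 0 < 1 - ρ ^ 2 := by nlinarith [hρ.1, hρ.2]
  set k := a * b + ε * ρ / (1 - ρ ^ 2)
  set r := a * b * (1 - ρ ^ 2) / (a * b * (1 - ρ ^ 2) + ε * ρ)
  have hk : 0 < k := by
    have : k = (a * b * (1 - ρ ^ 2) + ε * ρ) / (1 - ρ ^ 2) := by simp only [k]; field_simp
    rw [this]; positivity
  have hr : 0 < r := by positivity
  have hkr : k * r = a * b := by simp only [k, r]; field_simp
  have hmr : m * r = 1 := by simp only [hm, r]; field_simp
  obtain ⟨hx, hxk⟩ := sqrt_sq_add_sq_div_four_sub_half_mem_Ioo hk hε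
  have hroot := sq_add_mul_sqrt_sq_add_sq_div_four_sub_half k ε
  set x := √(k ^ 2 + ε ^ 2 / 4) - ε / 2
  clear_value k r x
  have habs : |c| < a * b := by
    rw [hc, abs_of_pos (mul_pos hx hr), ← hkr]
    exact mul_lt_mul_of_pos_right hxk hr
  have hdet : c ^ 2 < a ^ 2 * b ^ 2 := by
    rw [← mul_pow, ← sq_abs]
    exact pow_lt_pow_left₀ habs (abs_nonneg c) two_ne_zero
  have hscalar : ε * c = m * (a ^ 2 * b ^ 2 - c ^ 2) := by
    rw [hc]
    linear_combination r * hroot + (x ^ 2 - k ^ 2) * r * hmr + m * (a * b + k * r) * hkr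
  refine ⟨habs, posDef_fin_two_of (pow_pos ha 2) hdet, ?_⟩
  rw [hscalar]
  field_simp
end
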